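/- arXiv:2512.21753 — 7 statements merged into one kernel-verified Lean document; each statement's English description precedes it below -/
import Mathlib

section
/- For all natural numbers i and n with i ≤ n and n ≡ i (mod 2), one has f(i,n) + C(n, (n+i)/2 + 1) = C(n, (n+i)/2), where C denotes the binomial coefficient. Moreover, f(i,n) = 0 whenever i > n or n ≢ i (mod 2). -/
/-- The number of walks of length `n` on the nonnegative integers starting at `0`,
ending at `i`, with steps `+1` or `-1`. -/
noncomputable def walkCount (i n : ℕ) : ℕ :=
  Nat.card {w : Fin (n + 1) → ℕ //
    w 0 = 0 ∧ w (Fin.last n) = i ∧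
    ∀ k : Fin n, ((w k.succ : ℤ) - (w k.castSucc : ℤ)).natAbs = 1}

/-- The set of walks, as a subtype. -/
abbrev WalkSet (i n : ℕ) : Type :=
  {w : Fin (n + 1) → ℕ //
    w 0 = 0 ∧ w (Fin.last n) = i ∧
    ∀ k : Fin n, ((w k.succ : ℤ) - (w k.castSucc : ℤ)).natAbs = 1}

lemma walkCount_def (i n : ℕ) : walkCount i n = Nat.card (WalkSet i n) := rfl

lemma walk_le {i n : ℕ} (w : WalkSet i n) : ∀ m (hm : m < n + 1), w.1 ⟨m, hm⟩ ≤ m := by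
  intro m
  induction m with
  | zero =>
    intro hm
    have : (⟨0, hm⟩ : Fin (n+1)) = 0 := rfl
    rw [this, w.2.1]
  | succ m ih =>
    intro hm
    have hm' : m < n + 1 := by omega
    have hk : m < n := by omega
    have hstep := w.2.2.2 ⟨m, hk⟩
    have h1 : (⟨m, hk⟩ : Fin n).castSucc = ⟨m, hm'⟩ := rfl
    have h2 : (⟨m, hk⟩ : Fin n).succ = ⟨m + 1, hm⟩ := rfl
    rw [h1, h2] at hstep
    have := ih hm'
    omega

instance walkFinite (i n : ℕ) : Finite (WalkSet i n) := by
  apply Finite.of_injective (fun w : WalkSet i n =>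
    (fun k : Fin (n+1) => (⟨w.1 k, lt_of_le_of_lt (walk_le w k.1 k.2) k.2⟩ : Fin (n+1))))
  intro a b hab
  apply Subtype.ext; funext k
  have := congrFun hab k
  simpa [Fin.ext_iff] using this

/-- Extend a walk ending at `j` by one more step to `i`. -/
def snocWalk {j n : ℕ} (i : ℕ) (h : ((i : ℤ) - (j : ℤ)).natAbs = 1) (w : WalkSet j n) :
    WalkSet i (n + 1) := by
  refine ⟨Fin.snoc w.1 i, ?_, ?_, ?_⟩
  · show (Fin.snoc w.1 i : Fin (n+2) → ℕ) (Fin.castSucc 0) = 0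
    rw [Fin.snoc_castSucc, w.2.1]
  · exact Fin.snoc_last _ _
  · intro k
    induction k using Fin.lastCases with
    | last =>
      rw [Fin.succ_last]
      show (((Fin.snoc w.1 i : Fin (n+2) → ℕ) (Fin.last (n+1)) : ℤ)
        - ((Fin.snoc w.1 i : Fin (n+2) → ℕ) ((Fin.last n).castSucc) : ℤ)).natAbs = 1
      rw [Fin.snoc_last, Fin.snoc_castSucc, w.2.2.1]
      exact h
    | cast j =>
      rw [Fin.succ_castSucc]
      show (((Fin.snoc w.1 i : Fin (n+2) → ℕ) (j.succ.castSucc) : ℤ)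
        - ((Fin.snoc w.1 i : Fin (n+2) → ℕ) (j.castSucc.castSucc) : ℤ)).natAbs = 1
      rw [Fin.snoc_castSucc, Fin.snoc_castSucc]
      exact w.2.2.2 j

lemma snocWalk_injective {j n : ℕ} (i : ℕ) (h : ((i : ℤ) - (j : ℤ)).natAbs = 1) :
    Function.Injective (snocWalk (n := n) i h) := by
  intro a b hab
  apply Subtype.ext; funext k
  have := congrFun (congrArg Subtype.val hab) k.castSucc
  simpa [snocWalk, Fin.snoc_castSucc] using this

/-- Every walk of positive length is a one-step extension. -/
lemma exists_restrict {i n : ℕ} (w : WalkSet i (n + 1)) :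
    ∃ (j : ℕ) (hj : ((i : ℤ) - (j : ℤ)).natAbs = 1) (v : WalkSet j n),
      snocWalk i hj v = w := by
  have hlast := w.2.2.1
  have hstep := w.2.2.2 (Fin.last n)
  rw [Fin.succ_last, hlast] at hstep
  refine ⟨w.1 ((Fin.last n).castSucc), hstep, ⟨fun k => w.1 k.castSucc, ?_, rfl, ?_⟩, ?_⟩
  · show w.1 (Fin.castSucc 0) = 0
    rw [Fin.castSucc_zero]; exact w.2.1
  · intro k
    have := w.2.2.2 k.castSucc
    rwa [Fin.succ_castSucc] at this
  · apply Subtype.ext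
    show Fin.snoc (fun k : Fin (n+1) => w.1 k.castSucc) i = w.1
    have h := Fin.snoc_init_self w.1
    rw [hlast] at h
    exact h

lemma walkCount_zero_zero : walkCount 0 0 = 1 := by
  rw [walkCount_def]
  have : Unique (WalkSet 0 0) := by
    refine ⟨⟨⟨fun _ => 0, rfl, rfl, fun k => k.elim0⟩⟩, ?_⟩
    intro w
    apply Subtype.ext; funext k
    have : k = 0 := Fin.ext (by omega)
    rw [this, w.2.1]; rfl
  exact Nat.card_unique

lemma walkCount_zero_ne {i : ℕ} (hi : i ≠ 0) : walkCount i 0 = 0 := by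
  rw [walkCount_def]
  have : IsEmpty (WalkSet i 0) := by
    constructor
    rintro ⟨w, h0, hl, _⟩
    apply hi
    rw [← hl, show Fin.last 0 = (0 : Fin 1) from rfl]
    exact h0
  exact Nat.card_of_isEmpty

lemma walkCount_succ_zero (n : ℕ) : walkCount 0 (n + 1) = walkCount 1 n := by
  rw [walkCount_def, walkCount_def]
  have h : ((0 : ℤ) - (1 : ℕ)).natAbs = 1 := by norm_num
  refine (Nat.card_eq_of_bijective (snocWalk 0 h) ⟨snocWalk_injective 0 h, ?_⟩).symm
  intro w
  obtain ⟨j, hj, v, rfl⟩ := exists_restrict w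
  have : j = 1 := by omega
  subst this
  exact ⟨v, rfl⟩

lemma walkCount_succ_succ (i n : ℕ) :
    walkCount (i + 1) (n + 1) = walkCount i n + walkCount (i + 2) n := by
  rw [walkCount_def, walkCount_def, walkCount_def, ← Nat.card_sum]
  have h1 : (((i : ℕ) + 1 : ℤ) - (i : ℕ)).natAbs = 1 := by omega
  have h2 : (((i : ℕ) + 1 : ℤ) - ((i : ℕ) + 2 : ℕ)).natAbs = 1 := by omega
  refine (Nat.card_eq_of_bijective
    (Sum.elim (snocWalk (i + 1) h1) (snocWalk (i + 1) h2)) ⟨?_, ?_⟩).symm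
  · rintro (a | a) (b | b) hab
    · exact congrArg Sum.inl (snocWalk_injective _ h1 hab)
    · exfalso
      have := congrFun (congrArg Subtype.val hab) (Fin.last n).castSucc
      simp only [Sum.elim_inl, Sum.elim_inr, snocWalk, Fin.snoc_castSucc] at this
      have ha := a.2.2.1; have hb := b.2.2.1
      omega
    · exfalso
      have := congrFun (congrArg Subtype.val hab) (Fin.last n).castSucc
      simp only [Sum.elim_inl, Sum.elim_inr, snocWalk, Fin.snoc_castSucc] at this
      have ha := a.2.2.1; have hb := b.2.2.1
      omega
    · exact congrArg Sum.inr (snocWalk_injective _ h2 hab)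
  · intro w
    obtain ⟨j, hj, v, rfl⟩ := exists_restrict w
    have : j = i ∨ j = i + 2 := by omega
    rcases this with rfl | rfl
    · exact ⟨Sum.inl v, rfl⟩
    · exact ⟨Sum.inr v, rfl⟩

theorem walkCount_formula (i n : ℕ) :
    (i ≤ n → n % 2 = i % 2 →
      walkCount i n + Nat.choose n ((n + i) / 2 + 1) = Nat.choose n ((n + i) / 2)) ∧
    (i > n ∨ n % 2 ≠ i % 2 → walkCount i n = 0) := by
  induction n generalizing i with
  | zero =>
    constructor
    · intro h1 _
      interval_cases i
      simp [walkCount_zero_zero]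
    · intro h
      exact walkCount_zero_ne (by omega)
  | succ n ih =>
    constructor
    · intro hle hpar
      cases i with
      | zero =>
        have hn : n % 2 = 1 := by omega
        have hn1 : 1 ≤ n := by omega
        rw [walkCount_succ_zero]
        have h1 := (ih 1).1 hn1 (by omega)
        obtain ⟨k, hk⟩ : ∃ k, (n + 1) / 2 = k + 1 := ⟨(n+1)/2 - 1, by omega⟩
        rw [hk] at h1
        have e1 : (n + 1 + 0) / 2 = k + 1 := by omega
        rw [e1]
        have p1 : Nat.choose (n+1) (k+1+1) = Nat.choose n (k+1) + Nat.choose n (k+1+1) :=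
          Nat.choose_succ_succ n (k+1)
        have p2 : Nat.choose (n+1) (k+1) = Nat.choose n k + Nat.choose n (k+1) :=
          Nat.choose_succ_succ n k
        have hsym : Nat.choose n k = Nat.choose n (k+1) := by
          have h' : k + 1 ≤ n := by omega
          have := Nat.choose_symm h'
          rwa [show n - (k+1) = k by omega] at this
        rw [p1, p2]
        linarith
      | succ j =>
        rw [walkCount_succ_succ]
        rcases (show j = n ∨ j + 2 ≤ n by omega) with hj | hj2
        · subst hj
          have hn := (ih j).1 le_rfl rfl
          rw [show (j + j) / 2 = j by omega] at hn
          rw [Nat.choose_self, Nat.choose_succ_self] at hn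
          have hz := (ih (j+2)).2 (Or.inl (by omega))
          rw [hz, show (j + 1 + (j + 1)) / 2 = j + 1 by omega,
            Nat.choose_self, Nat.choose_succ_self]
          omega
        · have hpar' : n % 2 = j % 2 := by omega
          set a := (n + j) / 2 with ha
          have h1 := (ih j).1 (by omega) hpar'
          have h2 := (ih (j+2)).1 (by omega) (by omega)
          rw [← ha] at h1
          rw [show (n + (j+2)) / 2 = a + 1 by omega] at h2
          rw [show (n + 1 + (j+1)) / 2 = a + 1 by omega]
          have p1 : Nat.choose (n+1) (a+1+1) = Nat.choose n (a+1) + Nat.choose n (a+1+1) :=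
            Nat.choose_succ_succ n (a+1)
          have p2 : Nat.choose (n+1) (a+1) = Nat.choose n a + Nat.choose n (a+1) :=
            Nat.choose_succ_succ n a
          rw [p1, p2]
          linarith
    · intro h
      cases i with
      | zero =>
        rw [walkCount_succ_zero]
        exact (ih 1).2 (Or.inr (by omega))
      | succ j =>
        rw [walkCount_succ_succ]
        have z1 := (ih j).2 (by omega)
        have z2 := (ih (j+2)).2 (by omega)
        omega
end

section
/- Let G ∈ ℚ⟦X⟧ be the formal power series G = X·(1 + X²)⁻¹. Then substituting G for the variable in the formal power series X·E (the series whose (n+1)-st coefficient is f(0,n) and whose constant coefficient is 0) yields X; that is, G is a compositional right-inverse of X·E. -/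
/-- Composition `f ∘ g` of formal power series: substituting `g` (which is intended to
have zero constant coefficient) for the variable of `f`.  Since `g` has zero constant
term, the coefficient of `X^n` in `f(g)` only involves `g^k` for `k ≤ n`. -/
noncomputable def psComp (f g : PowerSeries ℚ) : PowerSeries ℚ :=
  PowerSeries.mk fun n =>
    ∑ k ∈ Finset.range (n + 1), PowerSeries.coeff (R := ℚ) k f * PowerSeries.coeff (R := ℚ) n (g ^ k)


/-!
A walk on `ℕ` from `0` back to `0` is a Dyck path, so `E(X) = C(X²)` for the Catalan series `C`,
and `C = 1 + X C²` turns into `F = X + X F²` for `F = X E`. Substituting `G` gives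
`F(G) = G + G F(G)²`, an equation that `X` also solves because `X = G (1 + X²)`. Its solution is
unique among series without constant term: `(F(G) - X) (1 - G (F(G) + X)) = 0` and the second
factor is a unit.
-/

open DyckStep

namespace DyckStep

def toInt : DyckStep → ℤ
  | U => 1
  | D => -1

lemma natAbs_toInt (s : DyckStep) : s.toInt.natAbs = 1 := by
  cases s <;> rfl

def ofHeights (a b : ℕ) : DyckStep := if a < b then U else D

lemma ofHeights_eq_of_eq_add {a b : ℕ} {s : DyckStep} (h : (b : ℤ) = a + s.toInt) :
    ofHeights a b = s := by
  cases s <;> simp only [toInt] at h <;> simp [ofHeights] <;> omega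

lemma eq_add_toInt_ofHeights {a b : ℕ} (h : ((b : ℤ) - a).natAbs = 1) :
    (b : ℤ) = a + (ofHeights a b).toInt := by
  unfold ofHeights
  split_ifs <;> simp only [toInt] <;> omega

end DyckStep

def pathHeight (l : List DyckStep) (j : ℕ) : ℤ :=
  ((l.take j).count U : ℤ) - (l.take j).count D

@[simp]
lemma pathHeight_zero (l : List DyckStep) : pathHeight l 0 = 0 := by
  simp [pathHeight]

lemma pathHeight_succ {l : List DyckStep} {j : ℕ} (hj : j < l.length) :
    pathHeight l (j + 1) = pathHeight l j + l[j].toInt := by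
  unfold pathHeight
  rw [List.take_add_one, List.getElem?_eq_getElem hj]
  cases l[j] <;> simp [List.count_append, toInt] <;> ring

lemma pathHeight_eq_min (l : List DyckStep) (j : ℕ) :
    pathHeight l j = pathHeight l (min j l.length) := by
  rw [pathHeight, pathHeight, ← List.take_eq_take_min]

lemma pathHeight_length (l : List DyckStep) :
    pathHeight l l.length = (l.count U : ℤ) - l.count D := by
  simp [pathHeight]

lemma DyckWord.pathHeight_nonneg (p : DyckWord) (j : ℕ) : 0 ≤ pathHeight p.toList j := by
  have := p.count_D_le_count_U j
  unfold pathHeight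
  omega

def walkSteps {n : ℕ} (w : Fin (n + 1) → ℕ) : List DyckStep :=
  List.ofFn fun k : Fin n => ofHeights (w k.castSucc) (w k.succ)

@[simp]
lemma length_walkSteps {n : ℕ} (w : Fin (n + 1) → ℕ) : (walkSteps w).length = n := by
  simp [walkSteps]

lemma pathHeight_walkSteps {n : ℕ} {w : Fin (n + 1) → ℕ} (h0 : w 0 = 0)
    (hs : ∀ k : Fin n, ((w k.succ : ℤ) - (w k.castSucc : ℤ)).natAbs = 1) (j : Fin (n + 1)) :
    pathHeight (walkSteps w) j = w j := by
  induction j using Fin.induction with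
  | zero => simp [h0]
  | succ k ih =>
    rw [Fin.val_castSucc] at ih
    rw [Fin.val_succ, pathHeight_succ (by simp), ih, eq_add_toInt_ofHeights (hs k)]
    simp [walkSteps]

lemma pathHeight_walkSteps_nonneg {n : ℕ} {w : Fin (n + 1) → ℕ} (h0 : w 0 = 0)
    (hs : ∀ k : Fin n, ((w k.succ : ℤ) - (w k.castSucc : ℤ)).natAbs = 1) (j : ℕ) :
    0 ≤ pathHeight (walkSteps w) j := by
  rw [pathHeight_eq_min, length_walkSteps,
    pathHeight_walkSteps h0 hs ⟨min j n, by omega⟩]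
  positivity

def walkEquivDyckWord (n : ℕ) :
    {w : Fin (n + 1) → ℕ // w 0 = 0 ∧ w (Fin.last n) = 0 ∧
      ∀ k : Fin n, ((w k.succ : ℤ) - (w k.castSucc : ℤ)).natAbs = 1} ≃
    {p : DyckWord // p.toList.length = n} where
  toFun w :=
    ⟨{ toList := walkSteps w.1
       count_U_eq_count_D := by
         have h := pathHeight_walkSteps w.2.1 w.2.2.2 (Fin.last n)
         have := pathHeight_length (walkSteps w.1)
         rw [length_walkSteps] at this
         rw [Fin.val_last, this, w.2.2.1] at h
         omega
       count_D_le_count_U := fun j => by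
         have := pathHeight_walkSteps_nonneg w.2.1 w.2.2.2 j
         unfold pathHeight at this
         omega },
      length_walkSteps w.1⟩
  invFun p := ⟨fun j => (pathHeight p.1.toList j).toNat, by simp, by
      have := pathHeight_length p.1.toList
      rw [p.2, p.1.count_U_eq_count_D, sub_self] at this
      simp [this],
      fun k => by
        rw [Int.toNat_of_nonneg (p.1.pathHeight_nonneg _),
          Int.toNat_of_nonneg (p.1.pathHeight_nonneg _), Fin.val_succ, Fin.val_castSucc,
          pathHeight_succ (by simp [p.2]), add_sub_cancel_left]
        exact natAbs_toInt _⟩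
  left_inv w := by
    ext j
    simp [pathHeight_walkSteps w.2.1 w.2.2.2]
  right_inv p := by
    ext1; ext1
    refine List.ext_getElem (by simp [p.2]) fun k hk _ => ?_
    simp only [walkSteps, List.getElem_ofFn]
    apply ofHeights_eq_of_eq_add
    rw [Int.toNat_of_nonneg (p.1.pathHeight_nonneg _),
      Int.toNat_of_nonneg (p.1.pathHeight_nonneg _)]
    exact pathHeight_succ _

lemma DyckWord.card_length_eq (n : ℕ) :
    Nat.card {p : DyckWord // p.toList.length = n} = if 2 ∣ n then catalan (n / 2) else 0 := by
  split_ifs with hn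
  · obtain ⟨m, rfl⟩ := hn
    rw [Nat.mul_div_cancel_left m two_pos, ← DyckWord.card_dyckWord_semilength_eq_catalan,
      ← Nat.card_eq_fintype_card]
    refine Nat.card_congr (Equiv.subtypeEquivRight fun p => ?_)
    rw [← p.two_mul_semilength_eq_length]
    omega
  · have : IsEmpty {p : DyckWord // p.toList.length = n} :=
      ⟨fun ⟨p, hp⟩ => hn ⟨p.semilength, hp ▸ p.two_mul_semilength_eq_length.symm⟩⟩
    exact Nat.card_of_isEmpty

lemma walkCount_zero (n : ℕ) : walkCount 0 n = if 2 ∣ n then catalan (n / 2) else 0 :=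
  (Nat.card_congr (walkEquivDyckWord n)).trans (DyckWord.card_length_eq n)

open PowerSeries

lemma mk_walkCount_zero_eq_expand_catalanSeries :
    (mk fun n => (walkCount 0 n : ℚ)) =
      expand 2 two_ne_zero (map (Nat.castRingHom ℚ) catalanSeries) := by
  ext n
  rw [coeff_mk, coeff_expand, walkCount_zero]
  split_ifs <;> simp

lemma X_mul_mk_walkCount_zero :
    (X * mk fun n => (walkCount 0 n : ℚ)) =
      X + X * (X * mk fun n => (walkCount 0 n : ℚ)) ^ 2 := by
  have h := congrArg (fun f => expand 2 two_ne_zero (map (Nat.castRingHom ℚ) f))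
    catalanSeries_sq_mul_X_add_one
  simp only [map_add, map_mul, map_pow, map_X, map_one, expand_X,
    ← mk_walkCount_zero_eq_expand_catalanSeries] at h
  nth_rewrite 1 [← h]
  ring

lemma psComp_eq_subst {f g : ℚ⟦X⟧} (hg : constantCoeff g = 0) : psComp f g = f.subst g := by
  ext n
  rw [psComp, coeff_mk, coeff_subst' (.of_constantCoeff_zero' hg)]
  refine (finsum_eq_sum_of_support_subset _ fun k hk => ?_).symm
  rw [Finset.coe_range, Set.mem_Iio]
  by_contra hkn
  apply hk
  rw [coeff_of_lt_order n ((Nat.cast_lt.mpr (by omega)).trans_le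
    (le_order_pow_of_constantCoeff_eq_zero k hg)), mul_zero]

lemma eq_of_eq_add_mul_sq {R : Type*} [CommRing R] {G a b : R⟦X⟧} (hG : constantCoeff G = 0)
    (ha : a = G + G * a ^ 2) (hb : b = G + G * b ^ 2) : a = b := by
  have hunit : IsUnit (1 - G * (a + b)) := by
    simp [isUnit_iff_constantCoeff, hG]
  have : (a - b) * (1 - G * (a + b)) = 0 := by linear_combination ha - hb
  exact sub_eq_zero.mp ((hunit.mul_left_eq_zero).mp this)

theorem comp_inverse_excursions :
    psComp (PowerSeries.X * PowerSeries.mk fun n => (walkCount 0 n : ℚ))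
      (PowerSeries.X * (1 + PowerSeries.X ^ 2)⁻¹) = PowerSeries.X := by
  set G : ℚ⟦X⟧ := X * (1 + X ^ 2)⁻¹
  have hG : constantCoeff G = 0 := by simp [G]
  have hGX : X = G + G * X ^ 2 := by
    have : (1 + X ^ 2 : ℚ⟦X⟧) * (1 + X ^ 2)⁻¹ = 1 := PowerSeries.mul_inv_cancel _ (by simp)
    linear_combination (-X : ℚ⟦X⟧) * this
  rw [psComp_eq_subst hG]
  refine eq_of_eq_add_mul_sq hG ?_ hGX
  have hsubst := HasSubst.of_constantCoeff_zero' hG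
  conv_lhs => rw [X_mul_mk_walkCount_zero]
  rw [subst_add hsubst, subst_mul hsubst, subst_pow hsubst, subst_X hsubst]
end

section
/- (Reflection principle bijection.) For all natural numbers i and n, the number of functions w : {0,1,…,n} → ℤ with w(0) = 0, w(n) = i, |w(k+1) − w(k)| = 1 for all 0 ≤ k < n, and w(k) = −1 for some k, equals the number of functions w : {0,1,…,n} → ℤ with w(0) = −2, w(n) = i, and |w(k+1) − w(k)| = 1 for all 0 ≤ k < n. -/
attribute [local instance] Classical.propDecidable

/-- Reflection of a walk across `-1` on the initial segment `[0, m]`. -/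
noncomputable def wreflect {n : ℕ} (w : Fin (n+1) → ℤ) (m : Fin (n+1)) : Fin (n+1) → ℤ :=
  fun k => if k ≤ m then -2 - w k else w k

lemma wreflect_hit {n : ℕ} (w : Fin (n+1) → ℤ) (m k : Fin (n+1)) :
    wreflect w m k = -1 ↔ w k = -1 := by
  unfold wreflect; split
  · constructor <;> intro h <;> omega
  · exact Iff.rfl

lemma wreflect_invol {n : ℕ} (w : Fin (n+1) → ℤ) (m : Fin (n+1)) :
    wreflect (wreflect w m) m = w := by
  funext k; unfold wreflect; split <;> simp

lemma wreflect_steps {n : ℕ} (w : Fin (n+1) → ℤ) (m : Fin (n+1)) (hm : w m = -1)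
    (hs : ∀ k : Fin n, (w k.succ - w k.castSucc).natAbs = 1) :
    ∀ k : Fin n, ((wreflect w m) k.succ - (wreflect w m) k.castSucc).natAbs = 1 := by
  intro k
  have hks : (k.succ : Fin (n+1)).val = k.val + 1 := rfl
  have hkc : (k.castSucc : Fin (n+1)).val = k.val := rfl
  have hstep := hs k
  unfold wreflect
  by_cases h1 : k.succ ≤ m <;> by_cases h2 : k.castSucc ≤ m
  · simp only [if_pos h1, if_pos h2]; omega
  · exfalso; rw [Fin.le_def] at h1 h2; omega
  · -- boundary: castSucc = m
    have : k.castSucc = m := by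
      rw [Fin.le_def] at h1 h2; apply Fin.ext; omega
    simp only [if_neg h1, if_pos h2, this, hm]
    rw [this] at hstep; rw [hm] at hstep; omega
  · simp only [if_neg h1, if_neg h2]; exact hstep

/-- Least index where the walk hits `-1`. -/
noncomputable def hitIdx {n : ℕ} (w : Fin (n+1) → ℤ) (h : ∃ k, w k = -1) : Fin (n+1) :=
  ⟨Nat.find (p := fun j => ∃ hj : j < n+1, w ⟨j, hj⟩ = -1)
      (by obtain ⟨k, hk⟩ := h; exact ⟨k.val, k.isLt, by simpa using hk⟩),
   (Nat.find_spec (p := fun j => ∃ hj : j < n+1, w ⟨j, hj⟩ = -1)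
      (by obtain ⟨k, hk⟩ := h; exact ⟨k.val, k.isLt, by simpa using hk⟩)).1⟩

lemma hitIdx_spec {n : ℕ} (w : Fin (n+1) → ℤ) (h : ∃ k, w k = -1) :
    w (hitIdx w h) = -1 := by
  have := (Nat.find_spec (p := fun j => ∃ hj : j < n+1, w ⟨j, hj⟩ = -1)
      (by obtain ⟨k, hk⟩ := h; exact ⟨k.val, k.isLt, by simpa using hk⟩)).2
  exact this

lemma hitIdx_congr {n : ℕ} (w1 w2 : Fin (n+1) → ℤ) (h1 : ∃ k, w1 k = -1)
    (h2 : ∃ k, w2 k = -1) (hiff : ∀ k, w1 k = -1 ↔ w2 k = -1) :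
    hitIdx w1 h1 = hitIdx w2 h2 := by
  apply Fin.ext
  apply le_antisymm
  · apply Nat.find_le
    obtain ⟨hj, hv⟩ := (Nat.find_spec (p := fun j => ∃ hj : j < n+1, w2 ⟨j, hj⟩ = -1) _)
    exact ⟨hj, (hiff _).2 hv⟩
  · apply Nat.find_le
    obtain ⟨hj, hv⟩ := (Nat.find_spec (p := fun j => ∃ hj : j < n+1, w1 ⟨j, hj⟩ = -1) _)
    exact ⟨hj, (hiff _).1 hv⟩

lemma exists_hit {n : ℕ} (i : ℕ) (w : Fin (n+1) → ℤ) (h0 : w 0 = -2)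
    (hl : w (Fin.last n) = (i : ℤ))
    (hs : ∀ k : Fin n, (w k.succ - w k.castSucc).natAbs = 1) :
    ∃ k, w k = -1 := by
  have hex : ∃ j, ∃ hj : j < n+1, -1 ≤ w ⟨j, hj⟩ :=
    ⟨n, n.lt_succ_self, by
      rw [show (⟨n, n.lt_succ_self⟩ : Fin (n+1)) = Fin.last n from rfl, hl]; omega⟩
  obtain ⟨m, hm, hmv, hmin⟩ : ∃ m, ∃ hm : m < n+1, -1 ≤ w ⟨m, hm⟩ ∧
      ∀ j < m, ∀ hj : j < n+1, ¬ (-1 ≤ w ⟨j, hj⟩) := by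
    refine ⟨Nat.find hex, (Nat.find_spec hex).1, (Nat.find_spec hex).2, ?_⟩
    intro j hj hjn hv
    exact Nat.find_min hex hj ⟨hjn, hv⟩
  have hm0 : m ≠ 0 := by
    rintro rfl
    rw [show (⟨0, hm⟩ : Fin (n+1)) = 0 from rfl, h0] at hmv
    omega
  have hprev' : ¬ (-1 ≤ w ⟨m - 1, by omega⟩) := hmin (m - 1) (by omega) (by omega)
  have hmn : m - 1 < n := by omega
  have hstep := hs ⟨m - 1, hmn⟩
  have hsucc : (Fin.succ (⟨m - 1, hmn⟩ : Fin n)) = ⟨m, hm⟩ := by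
    apply Fin.ext; simp; omega
  have hcast : (Fin.castSucc (⟨m - 1, hmn⟩ : Fin n)) = ⟨m - 1, by omega⟩ := rfl
  rw [hsucc, hcast] at hstep
  exact ⟨⟨m, hm⟩, by omega⟩

theorem reflection_principle (i : ℕ) (n : ℕ) :
    Nat.card {w : Fin (n + 1) → ℤ //
      w 0 = 0 ∧ w (Fin.last n) = (i : ℤ) ∧
      (∀ k : Fin n, (w k.succ - w k.castSucc).natAbs = 1) ∧
      ∃ k : Fin (n + 1), w k = -1} =
    Nat.card {w : Fin (n + 1) → ℤ //
      w 0 = -2 ∧ w (Fin.last n) = (i : ℤ) ∧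
      ∀ k : Fin n, (w k.succ - w k.castSucc).natAbs = 1} := by
  apply Nat.card_congr
  refine
    { toFun := fun x => ⟨wreflect x.1 (hitIdx x.1 x.2.2.2.2), ?_, ?_, ?_⟩
      invFun := fun x =>
        ⟨wreflect x.1 (hitIdx x.1 (exists_hit i x.1 x.2.1 x.2.2.1 x.2.2.2)), ?_, ?_, ?_, ?_⟩
      left_inv := ?_
      right_inv := ?_ }
  · -- starts at -2
    obtain ⟨w, h0, hl, hs, hhit⟩ := x
    simp only [wreflect, if_pos (Fin.zero_le _), h0]
    norm_num
  · -- ends at i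
    obtain ⟨w, h0, hl, hs, hhit⟩ := x
    have hspec := hitIdx_spec w hhit
    have hne : ¬ Fin.last n ≤ hitIdx w hhit := by
      intro h
      have : hitIdx w hhit = Fin.last n := le_antisymm (Fin.le_last _) h
      rw [this, hl] at hspec
      omega
    simp only [wreflect, if_neg hne, hl]
  · exact wreflect_steps _ _ (hitIdx_spec x.1 x.2.2.2.2) x.2.2.2.1
  · -- starts at 0
    obtain ⟨w, h0, hl, hs⟩ := x
    simp only [wreflect, if_pos (Fin.zero_le _), h0]
    norm_num
  · -- ends at i
    obtain ⟨w, h0, hl, hs⟩ := x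
    have hhit := exists_hit i w h0 hl hs
    have hspec := hitIdx_spec w hhit
    have hne : ¬ Fin.last n ≤ hitIdx w hhit := by
      intro h
      have : hitIdx w hhit = Fin.last n := le_antisymm (Fin.le_last _) h
      rw [this, hl] at hspec
      omega
    simp only [wreflect, if_neg hne, hl]
  · exact wreflect_steps _ _ (hitIdx_spec x.1 (exists_hit i x.1 x.2.1 x.2.2.1 x.2.2.2)) x.2.2.2
  · -- hits -1
    obtain ⟨w, h0, hl, hs⟩ := x
    have hhit := exists_hit i w h0 hl hs
    refine ⟨hitIdx w hhit, ?_⟩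
    rw [wreflect_hit]
    exact hitIdx_spec w hhit
  · -- left inverse
    rintro ⟨w, h0, hl, hs, hhit⟩
    apply Subtype.ext
    simp only
    have hex2 : ∃ k, wreflect w (hitIdx w hhit) k = -1 :=
      ⟨hitIdx w hhit, (wreflect_hit _ _ _).2 (hitIdx_spec w hhit)⟩
    have hm : hitIdx (wreflect w (hitIdx w hhit)) hex2 = hitIdx w hhit :=
      hitIdx_congr _ _ hex2 hhit (fun k => wreflect_hit w (hitIdx w hhit) k)
    rw [hm, wreflect_invol]
  · -- right inverse
    rintro ⟨w, h0, hl, hs⟩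
    apply Subtype.ext
    simp only
    have hhit := exists_hit i w h0 hl hs
    have hex2 : ∃ k, wreflect w (hitIdx w hhit) k = -1 :=
      ⟨hitIdx w hhit, (wreflect_hit _ _ _).2 (hitIdx_spec w hhit)⟩
    have hm : hitIdx (wreflect w (hitIdx w hhit)) hex2 = hitIdx w hhit :=
      hitIdx_congr _ _ hex2 hhit (fun k => wreflect_hit w (hitIdx w hhit) k)
    rw [hm, wreflect_invol]
end

section
/- (Cycle lemma / Spitzer's lemma.) Let N ≥ 1 and let a₁, …, a_N be real numbers such that a₁ + ⋯ + a_N = 0 and no proper partial sum of consecutive aᵢ's read cyclically vanishes, i.e., for every index i ∈ {1,…,N} and every j with 1 ≤ j < N, the sum a_i + a_{i+1} + ⋯ + a_{i+j−1} (indices taken modulo N) is nonzero. Then there exists exactly one index i ∈ {1,…,N} such that for every j with 1 ≤ j ≤ N, the sum of the first j terms of the cyclic permutation a_i, a_{i+1}, …, a_{i+N−1} (indices modulo N) is nonnegative. -/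
/-!
Let `P k` be the partial sums of the `N`-periodic extension of `a`; since the terms sum to `0`,
`P` is `N`-periodic, and the cyclic sum of length `j` starting at `i` is `P (i + j) - P i`.
At an index `i < N` where `P` attains its minimum all these cyclic sums are nonnegative.
If they were nonnegative from two indices `i < i'`, then `P i ≤ P i'` and, going round through
`i + N`, `P i' ≤ P i`; so the cyclic sum of length `i' - i < N` from `i` would vanish.
-/

open Finset

namespace Function.Periodic

variable {α : Type*} {P : ℕ → α} {N : ℕ}

theorem exists_lt_forall_le [LinearOrder α] (hP : Periodic P N) (hN : 0 < N) :
    ∃ i < N, ∀ k, P i ≤ P k := by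
  obtain ⟨i, hi, hmin⟩ := (range N).exists_min_image P (nonempty_range_iff.2 hN.ne')
  exact ⟨i, mem_range.1 hi, fun k => hP.map_mod_nat k ▸ hmin _ (mem_range.2 (Nat.mod_lt k hN))⟩

theorem eq_of_forall_le_add [PartialOrder α] (hP : Periodic P N)
    (hne : ∀ i < N, ∀ j, 1 ≤ j → j < N → P (i + j) ≠ P i) {i i' : ℕ} (hi : i < N)
    (hi' : i' < N) (hmin : ∀ j, 1 ≤ j → j ≤ N → P i ≤ P (i + j))
    (hmin' : ∀ j, 1 ≤ j → j ≤ N → P i' ≤ P (i' + j)) : i = i' := by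
  wlog hlt : i < i' generalizing i i'
  · rcases (not_lt.1 hlt).eq_or_lt with h | h
    · exact h.symm
    · exact (this hi' hi hmin' hmin h).symm
  have hle : P i ≤ P i' := by
    simpa [Nat.add_sub_cancel' hlt.le] using hmin (i' - i) (by omega) (by omega)
  have hge : P i' ≤ P i := by
    have := hmin' (N - (i' - i)) (by omega) (by omega)
    rwa [show i' + (N - (i' - i)) = i + N by omega, hP i] at this
  refine absurd ?_ (hne i hi (i' - i) (by omega) (by omega))
  rw [Nat.add_sub_cancel' hlt.le]
  exact le_antisymm hge hle

end Function.Periodic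

section PeriodicPartialSum

variable {M : Type*} [AddCommGroup M] (N : ℕ) (a : ℕ → M)

def periodicPartialSum (k : ℕ) : M :=
  ∑ l ∈ range k, a (l % N)

theorem periodicPartialSum_add (i j : ℕ) :
    periodicPartialSum N a (i + j) =
      periodicPartialSum N a i + ∑ l ∈ range j, a ((i + l) % N) :=
  sum_range_add _ i j

theorem sum_range_mod_eq_periodicPartialSum_sub (i j : ℕ) :
    ∑ l ∈ range j, a ((i + l) % N) = periodicPartialSum N a (i + j) - periodicPartialSum N a i :=
  eq_sub_of_add_eq' (periodicPartialSum_add N a i j).symm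

variable {N a}

theorem periodic_periodicPartialSum (hsum : ∑ l ∈ range N, a l = 0) :
    Function.Periodic (periodicPartialSum N a) N := by
  have hperiod : periodicPartialSum N a N = 0 := by
    rw [← hsum]
    exact sum_congr rfl fun l hl => by rw [Nat.mod_eq_of_lt (mem_range.1 hl)]
  intro k
  simp only [add_comm k N, periodicPartialSum_add, hperiod, Nat.add_mod_left, zero_add]
  rfl

end PeriodicPartialSum

/-- Cycle lemma (Spitzer's lemma): if `a 0, …, a (N-1)` are real numbers summing to `0`
such that no partial sum of fewer than `N` consecutive terms, read cyclically, vanishes,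
then there is exactly one starting index `i < N` such that all partial sums of the
cyclic permutation starting at `i` are nonnegative. -/
theorem cycle_lemma (N : ℕ) (hN : 1 ≤ N) (a : ℕ → ℝ)
    (hsum : ∑ l ∈ Finset.range N, a l = 0)
    (hnz : ∀ i < N, ∀ j, 1 ≤ j → j < N →
      (∑ l ∈ Finset.range j, a ((i + l) % N)) ≠ 0) :
    ∃! i, i < N ∧ ∀ j, 1 ≤ j → j ≤ N →
      0 ≤ ∑ l ∈ Finset.range j, a ((i + l) % N) := by
  have hP := periodic_periodicPartialSum hsum
  simp only [sum_range_mod_eq_periodicPartialSum_sub, sub_ne_zero, sub_nonneg] at hnz ⊢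
  obtain ⟨i, hi, hmin⟩ := hP.exists_lt_forall_le hN
  exact ⟨i, ⟨hi, fun j _ _ => hmin _⟩, fun i' ⟨hi', hmin'⟩ =>
    (hP.eq_of_forall_le_add hnz hi hi' (fun j _ _ => hmin _) hmin').symm⟩
end

section
/- Let r and s be positive integers that are relatively prime. Then the number of lattice paths that start at (0,0), consist of unit steps (1,0) and (0,1), end at (r,s), and stay weakly below the line r·y = s·x (i.e., every point (a,b) visited satisfies r·b ≤ s·a) equals C(r+s, s)/(r+s); equivalently, (r+s) times this number of paths equals the binomial coefficient C(r+s, s). -/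
/-- Cycle lemma application: the number of lattice paths from `(0,0)` to `(r,s)` with
unit steps east and north staying weakly below the line `r·y = s·x`. -/
noncomputable def subDiagonalPathCount (r s : ℕ) : ℕ :=
  Nat.card {w : Fin (r + s + 1) → ℕ × ℕ //
    w 0 = (0, 0) ∧ w (Fin.last (r + s)) = (r, s) ∧
    (∀ k : Fin (r + s), w k.succ = w k.castSucc + (1, 0) ∨
      w k.succ = w k.castSucc + (0, 1)) ∧
    ∀ k : Fin (r + s + 1), r * (w k).2 ≤ s * (w k).1}

/-!
Encode a path by its step sequence `f : Fin (r + s) → Bool` and give an east step weight `s`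
and a north step weight `-r`. The path stays weakly below the line iff every prefix sum of the
weights is nonnegative, and it ends at `(r, s)` iff the total weight is `0`.

Cycle lemma: exactly one of the `r + s` cyclic rotations of such a sequence has all prefix sums
nonnegative. Rotating to a position where the prefix sum is minimal gives one. Every weight is
`≡ s` modulo `r + s`, and `s` is coprime to `r + s`, so the prefix sums of lengths
`0, …, r + s - 1` are pairwise distinct; a second good rotation would force two of them to be
equal. Hence `(i, f) ↦ rotate i f` is a bijection from `Fin (r + s) × {subdiagonal paths}` onto
all `C(r + s, s)` paths to `(r, s)`.
-/


open Finset Fin.NatCast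

namespace Fin

variable {n : ℕ} [NeZero n] {α M : Type*}

def rotate (i : Fin n) (a : Fin n → α) : Fin n → α := fun j => a (j + i)

@[simp]
theorem rotate_zero (a : Fin n → α) : rotate 0 a = a := by
  funext j
  simp [rotate]

theorem rotate_rotate (i j : Fin n) (a : Fin n → α) :
    rotate i (rotate j a) = rotate (i + j) a := by
  funext k
  simp [rotate, add_assoc]

@[simp]
theorem rotate_neg_rotate (i : Fin n) (a : Fin n → α) : rotate (-i) (rotate i a) = a := by
  rw [rotate_rotate, neg_add_cancel, rotate_zero]

/-- The casts `(j : Fin n)` wrap around, so this is a prefix sum of the `n`-periodic extension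
of `a`. -/
def cyclicPrefixSum [AddCommMonoid M] (a : Fin n → M) (k : ℕ) : M :=
  ∑ j ∈ range k, a j

section AddCommMonoid

variable [AddCommMonoid M] (a : Fin n → M)

@[simp]
theorem cyclicPrefixSum_zero : cyclicPrefixSum a 0 = 0 :=
  sum_range_zero _

theorem cyclicPrefixSum_succ (j : Fin n) :
    cyclicPrefixSum a (j + 1) = cyclicPrefixSum a j + a j := by
  rw [cyclicPrefixSum, sum_range_succ, cast_val_eq_self]
  rfl

theorem cyclicPrefixSum_self : cyclicPrefixSum a n = ∑ j, a j := by
  simp [cyclicPrefixSum, ← Fin.sum_univ_eq_sum_range]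

theorem cyclicPrefixSum_self_add (k : ℕ) :
    cyclicPrefixSum a (n + k) = cyclicPrefixSum a n + cyclicPrefixSum a k := by
  simp [cyclicPrefixSum, sum_range_add]

theorem cyclicPrefixSum_add_rotate (i : Fin n) (k : ℕ) :
    cyclicPrefixSum a (i + k) = cyclicPrefixSum a i + cyclicPrefixSum (rotate i a) k := by
  simp [cyclicPrefixSum, sum_range_add, rotate, add_comm (i : Fin n)]

theorem cyclicPrefixSum_rotate_self (i : Fin n) :
    cyclicPrefixSum (rotate i a) n = cyclicPrefixSum a n := by
  simp only [cyclicPrefixSum_self, rotate]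
  exact Equiv.sum_comp (Equiv.addRight i) a

end AddCommMonoid

section CycleLemma

variable [AddCommGroup M] [LinearOrder M] [IsOrderedAddMonoid M] (a : Fin n → M)

theorem exists_forall_cyclicPrefixSum_rotate_nonneg (h : cyclicPrefixSum a n = 0) :
    ∃ i : Fin n, ∀ k ≤ n, 0 ≤ cyclicPrefixSum (rotate i a) k := by
  obtain ⟨m, hm, hmin⟩ :=
    exists_min_image (range n) (cyclicPrefixSum a) (nonempty_range_iff.mpr (NeZero.ne n))
  have hmn : m < n := mem_range.mp hm
  refine ⟨⟨m, hmn⟩, fun k hk => ?_⟩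
  have hle : cyclicPrefixSum a m ≤ cyclicPrefixSum a (m + k) := by
    rcases lt_or_ge (m + k) n with hlt | hge
    · exact hmin _ (mem_range.mpr hlt)
    · obtain ⟨t, ht⟩ := Nat.exists_eq_add_of_le hge
      rw [ht, cyclicPrefixSum_self_add, h, zero_add]
      exact hmin _ (mem_range.mpr (by omega))
  rwa [cyclicPrefixSum_add_rotate a ⟨m, hmn⟩, le_add_iff_nonneg_right] at hle

theorem eq_zero_of_forall_cyclicPrefixSum_rotate_nonneg
    (hinj : Set.InjOn (cyclicPrefixSum a) (Set.Iio n)) (h : cyclicPrefixSum a n = 0)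
    (ha : ∀ k ≤ n, 0 ≤ cyclicPrefixSum a k) {i : Fin n}
    (hi : ∀ k ≤ n, 0 ≤ cyclicPrefixSum (rotate i a) k) : i = 0 := by
  have hsplit := cyclicPrefixSum_add_rotate a i (n - i)
  rw [Nat.add_sub_cancel' i.is_lt.le, h, eq_comm, add_eq_zero_iff_eq_neg] at hsplit
  have hzero : cyclicPrefixSum a i = cyclicPrefixSum a 0 := by
    refine le_antisymm ?_ (ha i i.is_lt.le)
    rw [hsplit, cyclicPrefixSum_zero, neg_nonpos]
    exact hi _ (Nat.sub_le n i)
  exact Fin.ext (hinj i.is_lt (NeZero.pos n) hzero)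

end CycleLemma

theorem cyclicPrefixSum_injOn_of_modEq {a : Fin n → ℤ} {c : ℤ} (hc : IsCoprime c n)
    (ha : ∀ j, a j ≡ c [ZMOD n]) : Set.InjOn (cyclicPrefixSum a) (Set.Iio n) := by
  have hmod (k : ℕ) : cyclicPrefixSum a k ≡ k * c [ZMOD n] := by
    simpa [cyclicPrefixSum] using Int.ModEq.sum (s := range k) fun j _ => ha j
  intro k hk l hl hkl
  have hkl' : (k : ℤ) * c ≡ l * c [ZMOD n] := (hmod k).symm.trans (hkl ▸ hmod l)
  have hdvd : (n : ℤ) ∣ (l - k) * c := by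
    rw [sub_mul]; exact Int.ModEq.dvd hkl'
  have : k ≡ l [MOD n] := Int.natCast_modEq_iff.mp
    (Int.modEq_iff_dvd.mpr (hc.symm.dvd_of_dvd_mul_right hdvd))
  exact this.eq_of_lt_of_lt hk hl

theorem card_mul_card_eq_card_of_existsUnique_rotate (P G : (Fin n → α) → Prop)
    (hP : ∀ i a, P (rotate i a) ↔ P a) (hG : ∀ a, P a → ∃! i, G (rotate i a)) :
    n * Nat.card {a // P a ∧ G a} = Nat.card {a // P a} := by
  let Φ : Fin n × {a // P a ∧ G a} → {a // P a} :=
    fun ig => ⟨rotate ig.1 ig.2, (hP _ _).mpr ig.2.2.1⟩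
  have hΦ : Function.Bijective Φ := by
    constructor
    · rintro ⟨i, g, hPg, hGg⟩ ⟨j, g', hPg', hGg'⟩ h
      have h : rotate i g = rotate j g' := congrArg Subtype.val h
      have hg : g = rotate (-i + j) g' := by rw [← rotate_rotate, ← h, rotate_neg_rotate]
      have hij : -i + j = 0 :=
        (hG g' hPg').unique (hg ▸ hGg) (by rwa [rotate_zero])
      obtain rfl : i = j := neg_add_eq_zero.mp hij
      obtain rfl : g = g' := by rw [hg, hij, rotate_zero]
      rfl
    · rintro ⟨a, ha⟩
      obtain ⟨i, hi, -⟩ := hG a ha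
      exact ⟨(-i, ⟨rotate i a, (hP i a).mpr ha, hi⟩), Subtype.ext (rotate_neg_rotate i a)⟩
  rw [← Nat.card_eq_of_bijective Φ hΦ, Nat.card_prod, Nat.card_eq_fintype_card (α := Fin n),
    Fintype.card_fin]

end Fin

theorem card_boolFun_card_false_eq_choose {α : Type*} [Fintype α] [DecidableEq α] (k : ℕ) :
    Nat.card {f : α → Bool // #{j | f j = false} = k} = (Fintype.card α).choose k := by
  let e : {f : α → Bool // #{j | f j = false} = k} ≃ {t : Finset α // #t = k} :=
    { toFun f := ⟨({j | f.1 j = false} : Finset α), f.2⟩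
      invFun t := ⟨fun j => decide (j ∉ t.1), by simpa using t.2⟩
      left_inv f := by ext j; simp
      right_inv t := by ext j; simp }
  rw [Nat.card_congr e, Nat.card_eq_fintype_card, Fintype.card_finset_len]

namespace LatticePath

open Fin

def step (b : Bool) : ℕ × ℕ := if b then (1, 0) else (0, 1)

def slack (r s : ℕ) : ℕ × ℕ →+ ℤ where
  toFun p := s * p.1 - r * p.2
  map_zero' := by simp
  map_add' p q := by push_cast [Prod.fst_add, Prod.snd_add]; ring

theorem le_iff_slack_nonneg (r s : ℕ) (p : ℕ × ℕ) :
    r * p.2 ≤ s * p.1 ↔ 0 ≤ slack r s p := by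
  simp only [slack, AddMonoidHom.coe_mk, ZeroHom.coe_mk, sub_nonneg]
  exact_mod_cast Iff.rfl

theorem slack_step_modEq (r s : ℕ) (b : Bool) :
    slack r s (step b) ≡ s [ZMOD (r + s : ℕ)] := by
  cases b
  · simp [slack, step, Int.modEq_iff_dvd, add_comm]
  · simp [slack, step, Int.ModEq.refl]

variable {n : ℕ} [NeZero n]

def ofSteps (f : Fin n → Bool) (k : Fin (n + 1)) : ℕ × ℕ :=
  cyclicPrefixSum (step ∘ f) k

theorem ofSteps_zero (f : Fin n → Bool) : ofSteps f 0 = (0, 0) :=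
  cyclicPrefixSum_zero _

theorem ofSteps_succ (f : Fin n → Bool) (k : Fin n) :
    ofSteps f k.succ = ofSteps f k.castSucc + step (f k) :=
  cyclicPrefixSum_succ _ k

theorem ofSteps_succ_eq_or (f : Fin n → Bool) (k : Fin n) :
    ofSteps f k.succ = ofSteps f k.castSucc + (1, 0) ∨
      ofSteps f k.succ = ofSteps f k.castSucc + (0, 1) := by
  rw [ofSteps_succ]
  cases f k
  · exact Or.inr rfl
  · exact Or.inl rfl

theorem ofSteps_last (f : Fin n → Bool) :
    ofSteps f (last n) = (#{j | f j = true}, #{j | f j = false}) := by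
  rw [ofSteps, val_last, cyclicPrefixSum_self]
  ext <;> simp only [Prod.fst_sum, Prod.snd_sum, card_filter] <;>
    exact sum_congr rfl fun j _ => by rw [Function.comp_apply]; cases f j <;> rfl

theorem ofSteps_rotate_last (i : Fin n) (f : Fin n → Bool) :
    ofSteps (rotate i f) (last n) = ofSteps f (last n) :=
  cyclicPrefixSum_rotate_self (step ∘ f) i

theorem slack_ofSteps (r s : ℕ) (f : Fin n → Bool) (k : Fin (n + 1)) :
    slack r s (ofSteps f k) = cyclicPrefixSum (slack r s ∘ step ∘ f) k :=
  map_sum (slack r s) _ _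

theorem ofSteps_injective : Function.Injective (ofSteps (n := n)) := by
  intro f g h
  funext j
  have hj := congrFun h j.succ
  rw [ofSteps_succ, ofSteps_succ, h, add_right_inj] at hj
  cases hf : f j <;> cases hg : g j <;> simp_all [step]

theorem exists_ofSteps_eq (w : Fin (n + 1) → ℕ × ℕ) (h0 : w 0 = (0, 0))
    (hstep : ∀ k : Fin n, w k.succ = w k.castSucc + (1, 0) ∨ w k.succ = w k.castSucc + (0, 1)) :
    ∃ f, ofSteps f = w := by
  let f : Fin n → Bool := fun k => decide (w k.succ = w k.castSucc + (1, 0))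
  have hf (k : Fin n) : w k.succ = w k.castSucc + step (f k) := by
    rcases hstep k with h | h <;> simp [f, step, h]
  refine ⟨f, funext fun k => ?_⟩
  induction k using Fin.induction with
  | zero => rw [ofSteps_zero, h0]
  | succ k ih => rw [ofSteps_succ, ih, hf]

def IsSubdiagonal (r s : ℕ) (f : Fin n → Bool) : Prop :=
  ∀ k ≤ n, 0 ≤ cyclicPrefixSum (slack r s ∘ step ∘ f) k

theorem isSubdiagonal_iff (r s : ℕ) (f : Fin n → Bool) :
    IsSubdiagonal r s f ↔ ∀ k : Fin (n + 1), r * (ofSteps f k).2 ≤ s * (ofSteps f k).1 := by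
  simp only [le_iff_slack_nonneg, slack_ofSteps]
  exact ⟨fun h k => h k k.is_le, fun h k hk => h ⟨k, Nat.lt_succ_of_le hk⟩⟩

variable {r s : ℕ} [NeZero (r + s)]

theorem subDiagonalPathCount_eq_card :
    subDiagonalPathCount r s = Nat.card {f : Fin (r + s) → Bool //
      ofSteps f (last _) = (r, s) ∧ IsSubdiagonal r s f} := by
  refine (Nat.card_eq_of_bijective
    (fun f => ⟨ofSteps f.1, ofSteps_zero _, f.2.1, ofSteps_succ_eq_or _,
      (isSubdiagonal_iff r s _).mp f.2.2⟩)
    ⟨fun f g h => Subtype.ext (ofSteps_injective (congrArg Subtype.val h)), ?_⟩).symm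
  rintro ⟨w, h0, hlast, hstep, hdiag⟩
  obtain ⟨f, rfl⟩ := exists_ofSteps_eq w h0 hstep
  exact ⟨⟨f, hlast, (isSubdiagonal_iff r s f).mpr hdiag⟩, rfl⟩

theorem card_ofSteps_last_eq :
    Nat.card {f : Fin (r + s) → Bool // ofSteps f (last _) = (r, s)} = (r + s).choose s := by
  have hiff (f : Fin (r + s) → Bool) :
      ofSteps f (last _) = (r, s) ↔ #{j | f j = false} = s := by
    have hsplit := card_filter_add_card_filter_not (s := univ) fun j => f j = true
    simp only [Bool.not_eq_true, card_univ, Fintype.card_fin] at hsplit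
    rw [ofSteps_last, Prod.mk.injEq]
    omega
  rw [Nat.card_congr (Equiv.subtypeEquivRight hiff), card_boolFun_card_false_eq_choose,
    Fintype.card_fin]

theorem existsUnique_rotate_isSubdiagonal (hrs : Nat.Coprime r s) {f : Fin (r + s) → Bool}
    (hf : ofSteps f (last _) = (r, s)) : ∃! i, IsSubdiagonal r s (rotate i f) := by
  have htotal {g : Fin (r + s) → Bool} (hg : ofSteps g (last _) = (r, s)) :
      cyclicPrefixSum (slack r s ∘ step ∘ g) (r + s) = 0 := by
    have := slack_ofSteps r s g (last _)
    rw [val_last, hg] at this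
    rw [← this]
    simp [slack, mul_comm]
  have hinj (g : Fin (r + s) → Bool) :
      Set.InjOn (cyclicPrefixSum (slack r s ∘ step ∘ g)) (Set.Iio (r + s)) :=
    cyclicPrefixSum_injOn_of_modEq (Nat.isCoprime_iff_coprime.mpr
      (Nat.coprime_add_self_right.mpr hrs.symm)) fun j => slack_step_modEq r s (g j)
  obtain ⟨i, hi⟩ := exists_forall_cyclicPrefixSum_rotate_nonneg _ (htotal hf)
  refine ⟨i, hi, fun j hj => ?_⟩
  have hfi : ofSteps (rotate i f) (last _) = (r, s) := by rw [ofSteps_rotate_last, hf]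
  -- view `rotate j f` as a rotation of the subdiagonal sequence `rotate i f`
  rw [← rotate_neg_rotate i f, rotate_rotate] at hj
  exact add_neg_eq_zero.mp
    (eq_zero_of_forall_cyclicPrefixSum_rotate_nonneg _ (hinj _) (htotal hfi) hi hj)

end LatticePath

open LatticePath in
theorem subdiagonal_path_count_general (r s : ℕ) (hrs : Nat.Coprime r s) :
    (r + s) * subDiagonalPathCount r s = Nat.choose (r + s) s := by
  have : NeZero (r + s) := ⟨fun h => by simp_all [Nat.add_eq_zero_iff]⟩
  rw [subDiagonalPathCount_eq_card, Fin.card_mul_card_eq_card_of_existsUnique_rotate _ _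
    (fun i f => by rw [ofSteps_rotate_last]) fun f hf => existsUnique_rotate_isSubdiagonal hrs hf,
    card_ofSteps_last_eq]

theorem subdiagonal_path_count (r s : ℕ) (hr : 0 < r) (hs : 0 < s)
    (hrs : Nat.Coprime r s) :
    (r + s) * subDiagonalPathCount r s = Nat.choose (r + s) s :=
  subdiagonal_path_count_general r s hrs
end

section
/- The formal power series E ∈ ℚ⟦t⟧ whose n-th coefficient is f(0,n) satisfies the first-order linear differential equation t·(1 − 4t²)·E′ + (2 − 4t²)·E = 2, where E′ denotes the formal derivative of E with respect to t. -/
open DyckStep List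

abbrev Excursion (n : ℕ) := {w : Fin (n + 1) → ℕ //
    w 0 = 0 ∧ w (Fin.last n) = 0 ∧
    ∀ k : Fin n, ((w k.succ : ℤ) - (w k.castSucc : ℤ)).natAbs = 1}

def height (l : List DyckStep) : ℤ := l.count U - l.count D

lemma height_take_succ (l : List DyckStep) {k : ℕ} (hk : k < l.length) :
    height (l.take (k + 1)) = height (l.take k) + if l[k] = U then 1 else -1 := by
  rw [take_add_one, getElem?_eq_getElem hk]
  cases l[k] <;> grind [height]

namespace Excursion

def steps {n : ℕ} (w : Excursion n) : List DyckStep :=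
  ofFn fun k : Fin n => if w.1 k.castSucc < w.1 k.succ then U else D

lemma length_steps {n : ℕ} (w : Excursion n) : w.steps.length = n := length_ofFn

lemma height_take_steps {n : ℕ} (w : Excursion n) (k : Fin (n + 1)) :
    height (w.steps.take k) = w.1 k := by
  induction k using Fin.induction with
  | zero => simp [height, w.2.1]
  | succ k ih =>
    have hstep := w.2.2.2 k
    rw [Fin.val_castSucc] at ih
    rw [Fin.val_succ, height_take_succ _ (by simp [length_steps]), ih]
    grind [steps]

lemma height_take_steps_nonneg {n : ℕ} (w : Excursion n) (i : ℕ) :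
    0 ≤ height (w.steps.take i) := by
  rw [take_eq_take_min, length_steps]
  exact height_take_steps w ⟨min i n, by omega⟩ ▸ Int.natCast_nonneg _

lemma height_steps {n : ℕ} (w : Excursion n) : height w.steps = 0 := by
  have := height_take_steps w (Fin.last n)
  rwa [Fin.val_last, take_of_length_le w.length_steps.le, w.2.2.1, Nat.cast_zero] at this

end Excursion

namespace DyckWord

lemma height_take_nonneg (p : DyckWord) (i : ℕ) : 0 ≤ height (p.toList.take i) := by
  have := p.count_D_le_count_U i
  simp only [height]; omega

def toExcursion (p : DyckWord) {n : ℕ} (hp : p.toList.length = n) : Excursion n :=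
  ⟨fun k => (height (p.toList.take k)).toNat, by simp [height], by
    simp [← hp, height, p.count_U_eq_count_D], fun k => by
    have h := height_take_succ p.toList (k := k) (hp ▸ k.isLt)
    have h0 := p.height_take_nonneg k
    have h1 := p.height_take_nonneg (k + 1)
    rw [h] at h1
    simp only [Fin.val_succ, Fin.val_castSucc, h]
    split_ifs at h1 ⊢ <;> omega⟩

end DyckWord

def excursionEquivDyckWord (n : ℕ) : Excursion n ≃ {p : DyckWord // p.toList.length = n} where
  toFun w := ⟨⟨w.steps, by simpa [height, sub_eq_zero] using w.height_steps, fun i => by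
    simpa [height] using w.height_take_steps_nonneg i⟩, w.length_steps⟩
  invFun p := p.1.toExcursion p.2
  left_inv w := Subtype.ext <| funext fun k => by
    simp [DyckWord.toExcursion, Excursion.height_take_steps]
  right_inv p := by
    refine Subtype.ext <| DyckWord.ext <| ext_getElem (by simp [Excursion.length_steps, p.2]) ?_
    intro k hk hk'
    have h := height_take_succ p.1.toList hk'
    have h0 := p.1.height_take_nonneg k
    simp only [Excursion.steps, List.getElem_ofFn, DyckWord.toExcursion, Fin.val_succ,
      Fin.val_castSucc, h]
    cases p.1.toList[k] <;> grind

lemma walkCount_zero_eq_card (n : ℕ) :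
    walkCount 0 n = Nat.card {p : DyckWord // p.toList.length = n} :=
  Nat.card_congr (excursionEquivDyckWord n)

lemma walkCount_zero_two_mul (m : ℕ) : walkCount 0 (2 * m) = catalan m := by
  rw [walkCount_zero_eq_card, ← DyckWord.card_dyckWord_semilength_eq_catalan,
    ← Nat.card_eq_fintype_card]
  exact Nat.card_congr <| Equiv.subtypeEquivRight fun p => by
    rw [← p.two_mul_semilength_eq_length]; omega

lemma walkCount_zero_two_mul_add_one (m : ℕ) : walkCount 0 (2 * m + 1) = 0 := by
  rw [walkCount_zero_eq_card, Nat.card_eq_zero]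
  exact Or.inl ⟨fun ⟨p, hp⟩ => by have := p.two_mul_semilength_eq_length; omega⟩

lemma succ_succ_mul_catalan_succ (n : ℕ) :
    (n + 2) * catalan (n + 1) = 2 * (2 * n + 1) * catalan n := by
  have h₁ := succ_mul_catalan_eq_centralBinom (n + 1)
  have h₂ := Nat.succ_mul_centralBinom_succ n
  have h₃ := succ_mul_catalan_eq_centralBinom n
  apply Nat.eq_of_mul_eq_mul_left n.succ_pos
  calc (n + 1) * ((n + 2) * catalan (n + 1)) = (n + 1) * (n + 1).centralBinom := by rw [← h₁]
    _ = 2 * (2 * n + 1) * n.centralBinom := h₂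
    _ = (n + 1) * (2 * (2 * n + 1) * catalan n) := by rw [← h₃]; ring

lemma walkCount_zero_add_two (n : ℕ) :
    (n + 4) * walkCount 0 (n + 2) = 4 * (n + 1) * walkCount 0 n := by
  obtain ⟨m, rfl | rfl⟩ := Nat.even_or_odd' n
  · rw [show 2 * m + 2 = 2 * (m + 1) by ring, walkCount_zero_two_mul, walkCount_zero_two_mul]
    linear_combination 2 * succ_succ_mul_catalan_succ m
  · rw [show 2 * m + 1 + 2 = 2 * (m + 1) + 1 by ring, walkCount_zero_two_mul_add_one,
      walkCount_zero_two_mul_add_one, mul_zero, mul_zero]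

namespace PowerSeries

theorem ode_mk_of_recurrence {R : Type*} [CommRing R] (a : ℕ → R) (h0 : a 0 = 1) (h1 : a 1 = 0)
    (hrec : ∀ n : ℕ, (n + 4 : R) * a (n + 2) = 4 * (n + 1) * a n) :
    X * (1 - 4 * X ^ 2) * d⁄dX R (mk a) + (2 - 4 * X ^ 2) * mk a = 2 := by
  have hcoeff (n : ℕ) : coeff n (d⁄dX R (X * mk a)) = (n + 1) * a n := by
    rw [coeff_derivative, coeff_succ_X_mul, coeff_mk, mul_comm]
  have hsplit : X * (1 - 4 * X ^ 2) * d⁄dX R (mk a) + (2 - 4 * X ^ 2) * mk a =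
      d⁄dX R (X * mk a) - C 4 * (X ^ 2 * d⁄dX R (X * mk a)) + mk a := by
    rw [Derivation.leibniz, derivative_X, map_ofNat]; simp only [smul_eq_mul]; ring
  rw [hsplit, ← map_ofNat C 2]
  generalize d⁄dX R (X * mk a) = g at hcoeff
  ext (_ | _ | n) <;>
    simp only [map_add, map_sub, coeff_C_mul, coeff_X_pow_mul', coeff_mk, coeff_C, hcoeff]
  · norm_num [h0]
  · norm_num [h1]
  · rw [if_pos (by omega), show n + 1 + 1 - 2 = n by omega]
    push_cast
    linear_combination hrec n

end PowerSeries

theorem excursion_series_ode1 :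
    PowerSeries.X * (1 - 4 * PowerSeries.X ^ 2) *
        (PowerSeries.derivative ℚ (PowerSeries.mk fun n => (walkCount 0 n : ℚ))) +
      (2 - 4 * PowerSeries.X ^ 2) * (PowerSeries.mk fun n => (walkCount 0 n : ℚ)) = 2 := by
  apply PowerSeries.ode_mk_of_recurrence
  · simpa [catalan_zero] using walkCount_zero_two_mul 0
  · exact_mod_cast walkCount_zero_two_mul_add_one 0
  · intro n
    exact_mod_cast walkCount_zero_add_two n
end

section
/- (Combinatorial factorization.) For natural numbers i and m, let h(i,m) denote the number of walks of length m on the nonnegative integers starting at 0, ending at i, with steps +1 or −1, that do not visit 0 at any positive time (i.e., w(j) ≠ 0 for all 1 ≤ j ≤ m). Then for all natural numbers i and n, f(i,n) = Σ_{k=0}^{n} f(0,k)·h(i,n−k). -/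
/-- The number of walks of length `m` on the nonnegative integers starting at `0`,
ending at `i`, with steps `+1` or `-1`, which do not visit `0` at any positive time. -/
noncomputable def strictWalkCount (i m : ℕ) : ℕ :=
  Nat.card {w : Fin (m + 1) → ℕ //
    w 0 = 0 ∧ w (Fin.last m) = i ∧
    (∀ k : Fin m, ((w k.succ : ℤ) - (w k.castSucc : ℤ)).natAbs = 1) ∧
    ∀ j : Fin (m + 1), j ≠ 0 → w j ≠ 0}

def Fin.extendByZeroEquiv {α : Type*} [Zero α] (n : ℕ) :
    (Fin (n + 1) → α) ≃ {w : ℕ → α // ∀ k, n < k → w k = 0} where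
  toFun w := ⟨fun k => if h : k < n + 1 then w ⟨k, h⟩ else 0, fun k hk => dif_neg (by omega)⟩
  invFun w j := w.1 j
  left_inv w := by funext j; simp [j.isLt]
  right_inv w := by
    ext k
    by_cases h : k < n + 1
    · simp [h]
    · simp [h, w.2 k (by omega)]

theorem Nat.card_subtype_fin_eq_card_subtype_nat {α : Type*} [Zero α] {n : ℕ}
    {P : (Fin (n + 1) → α) → Prop} {Q : (ℕ → α) → Prop}
    (h : ∀ w, Q w ↔ (∀ k, n < k → w k = 0) ∧ P (fun j => w j)) :
    Nat.card {w // P w} = Nat.card {w // Q w} :=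
  Nat.card_congr <| ((Fin.extendByZeroEquiv n).symm.subtypeEquivOfSubtype.symm.trans
    (Equiv.subtypeSubtypeEquivSubtypeInter (fun w : ℕ → α => ∀ k, n < k → w k = 0)
      fun w => P fun j => w j)).trans (Equiv.subtypeEquivRight fun w => (h w).symm)

theorem Nat.card_eq_sum_card_fiber {X : Type*} [Finite X] (f : X → ℕ) {n : ℕ}
    (hf : ∀ x, f x ≤ n) : Nat.card X = ∑ k ∈ Finset.range (n + 1), Nat.card {x // f x = k} := by
  classical
  have := Fintype.ofFinite X
  simp only [Nat.card_eq_fintype_card, Fintype.card_subtype]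
  exact Finset.card_eq_sum_card_fiberwise fun x _ => Finset.mem_range_succ_iff.mpr (hf x)

namespace NatWalk

/-- Walks are indexed by all of `ℕ` and padded with `0` after time `n`, so that cutting and
gluing is plain index arithmetic. -/
def IsWalk (n i : ℕ) (w : ℕ → ℕ) : Prop :=
  w 0 = 0 ∧ w n = i ∧ (∀ k < n, ((w (k + 1) : ℤ) - w k).natAbs = 1) ∧ ∀ k, n < k → w k = 0

def AvoidsZero (n : ℕ) (w : ℕ → ℕ) : Prop :=
  ∀ j ≤ n, j ≠ 0 → w j ≠ 0

theorem walkCount_eq_card (i n : ℕ) : walkCount i n = Nat.card {w // IsWalk n i w} :=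
  Nat.card_subtype_fin_eq_card_subtype_nat fun w => by simp [IsWalk, Fin.forall_iff]; tauto

theorem strictWalkCount_eq_card (i n : ℕ) :
    strictWalkCount i n = Nat.card {w // IsWalk n i w ∧ AvoidsZero n w} :=
  Nat.card_subtype_fin_eq_card_subtype_nat fun w => by
    simp [IsWalk, AvoidsZero, Fin.forall_iff]
    tauto

theorem IsWalk.le_self {n i : ℕ} {w : ℕ → ℕ} (hw : IsWalk n i w) (j : ℕ) : w j ≤ j := by
  obtain ⟨h0, -, hstep, hpad⟩ := hw
  induction j with
  | zero => simp [h0]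
  | succ j ih =>
    rcases lt_or_ge j n with hj | hj
    · have := hstep j hj
      omega
    · simp [hpad (j + 1) (by omega)]

instance (n i : ℕ) : Finite {w // IsWalk n i w} := by
  refine Finite.of_injective (β := Fin (n + 1) → Fin (n + 1))
    (fun w j => ⟨w.1 j, (w.2.le_self j).trans_lt j.isLt⟩)
    fun w w' h => Subtype.ext <| funext fun j => ?_
  rcases le_or_gt j n with hj | hj
  · simpa using congrFun h ⟨j, Nat.lt_succ_of_le hj⟩
  · rw [w.2.2.2.2 j hj, w'.2.2.2.2 j hj]

section Glue

variable {α : Type*} (k : ℕ)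

def glue (u v : ℕ → α) : ℕ → α := fun j => if j ≤ k then u j else v (j - k)

theorem glue_glue_left (u u' v : ℕ → α) : glue k (glue k u u') v = glue k u v := by
  funext j
  simp only [glue]
  split_ifs <;> rfl

theorem glue_shift_self (w : ℕ → α) : glue k w (fun j => w (k + j)) = w := by
  funext j
  simp only [glue]
  split_ifs
  · rfl
  · congr 1
    omega

theorem glue_zero_eq_self [Zero α] {u : ℕ → α} (hu : ∀ j, k < j → u j = 0) :
    glue k u 0 = u := by
  funext j
  simp only [glue]
  split_ifs with h
  · rfl
  · exact (hu j (by omega)).symm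

theorem shift_glue {u v : ℕ → α} (h : v 0 = u k) : (fun j => glue k u v (k + j)) = v := by
  funext j
  simp only [glue]
  split_ifs with hj
  · obtain rfl : j = 0 := by omega
    exact h.symm
  · congr 1
    omega

end Glue

section Cut

variable {n i k : ℕ} {w : ℕ → ℕ}

theorem IsWalk.glue_zero (hw : IsWalk n i w) (hk : k ≤ n) (hwk : w k = 0) :
    IsWalk k 0 (glue k w 0) := by
  obtain ⟨h0, -, hstep, -⟩ := hw
  refine ⟨by simp [glue, h0], by simp [glue, hwk], fun j hj => ?_, fun j hj => ?_⟩
  · simpa [glue, hj, hj.le] using hstep j (by omega)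
  · simp [glue, hj.not_ge]

theorem IsWalk.shift (hw : IsWalk n i w) (hk : k ≤ n) (hwk : w k = 0) :
    IsWalk (n - k) i (fun j => w (k + j)) := by
  obtain ⟨-, hn, hstep, hpad⟩ := hw
  refine ⟨by simpa using hwk, by simpa [Nat.add_sub_cancel' hk] using hn, fun j hj => ?_,
    fun j hj => hpad _ (by omega)⟩
  simpa [← add_assoc] using hstep (k + j) (by omega)

theorem IsWalk.glue {u v : ℕ → ℕ} (hu : IsWalk k 0 u) (hv : IsWalk (n - k) i v) (hk : k ≤ n) :
    IsWalk n i (glue k u v) := by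
  obtain ⟨hu0, huk, hustep, -⟩ := hu
  obtain ⟨hv0, hvn, hvstep, hvpad⟩ := hv
  refine ⟨by simp [NatWalk.glue, hu0], ?_, fun j hj => ?_, fun j hj => ?_⟩
  · by_cases h : n ≤ k
    · obtain rfl : n = k := le_antisymm h hk
      simp_all [NatWalk.glue]
    · simp [NatWalk.glue, h, hvn]
  · rcases lt_trichotomy j k with hjk | rfl | hjk
    · simpa [NatWalk.glue, hjk.le, Nat.succ_le_of_lt hjk] using hustep j hjk
    · simpa [NatWalk.glue, huk, hv0] using hvstep 0 (by omega)
    · simpa [NatWalk.glue, hjk.not_ge, (hjk.trans (Nat.lt_succ_self j)).not_ge,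
        Nat.sub_add_comm hjk.le] using hvstep (j - k) (by omega)
  · simp [NatWalk.glue, show ¬ j ≤ k by omega, hvpad (j - k) (by omega)]

def lastZero (n : ℕ) (w : ℕ → ℕ) : ℕ :=
  Nat.findGreatest (w · = 0) n

theorem lastZero_eq_iff (h0 : w 0 = 0) (hk : k ≤ n) :
    lastZero n w = k ↔ w k = 0 ∧ AvoidsZero (n - k) (fun j => w (k + j)) := by
  simp only [lastZero, Nat.findGreatest_eq_iff, AvoidsZero]
  constructor
  · rintro ⟨-, hz, hgt⟩
    refine ⟨?_, fun j hj hj0 => hgt (by omega) (by omega)⟩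
    rcases k.eq_zero_or_pos with rfl | hpos
    · exact h0
    · exact hz hpos.ne'
  · rintro ⟨hz, hav⟩
    refine ⟨hk, fun _ => hz, fun j hkj hjn => ?_⟩
    simpa [Nat.add_sub_cancel' hkj.le] using hav (j - k) (by omega) (by omega)

theorem lastZero_glue {u v : ℕ → ℕ} (hu : IsWalk k 0 u) (hv : IsWalk (n - k) i v)
    (hav : AvoidsZero (n - k) v) (hk : k ≤ n) : lastZero n (glue k u v) = k := by
  rw [lastZero_eq_iff (by simp [glue, hu.1]) hk, shift_glue k (hv.1.trans hu.2.1.symm)]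
  exact ⟨by simp [glue, hu.2.1], hav⟩

def lastZeroFiberEquiv (hk : k ≤ n) :
    {w : {w // IsWalk n i w} // lastZero n w.1 = k} ≃
      {u // IsWalk k 0 u} × {v // IsWalk (n - k) i v ∧ AvoidsZero (n - k) v} where
  toFun w :=
    have hcut := (lastZero_eq_iff w.1.2.1 hk).mp w.2
    (⟨glue k w.1.1 0, w.1.2.glue_zero hk hcut.1⟩, ⟨_, w.1.2.shift hk hcut.1, hcut.2⟩)
  invFun p := ⟨⟨glue k p.1.1 p.2.1, p.1.2.glue p.2.2.1 hk⟩, lastZero_glue p.1.2 p.2.2.1 p.2.2.2 hk⟩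
  left_inv _ := Subtype.ext <| Subtype.ext <| (glue_glue_left ..).trans (glue_shift_self ..)
  right_inv p := Prod.ext
    (Subtype.ext <| (glue_glue_left ..).trans (glue_zero_eq_self k p.1.2.2.2.2))
    (Subtype.ext <| shift_glue k (p.2.2.1.1.trans p.1.2.2.1.symm))

end Cut

end NatWalk

theorem walkCount_factorization (i n : ℕ) :
    walkCount i n =
      ∑ k ∈ Finset.range (n + 1), walkCount 0 k * strictWalkCount i (n - k) := by
  rw [NatWalk.walkCount_eq_card,
    Nat.card_eq_sum_card_fiber (fun w : {w // NatWalk.IsWalk n i w} => NatWalk.lastZero n w.1)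
      fun _ => Nat.findGreatest_le n]
  refine Finset.sum_congr rfl fun k hk => ?_
  rw [Nat.card_congr (NatWalk.lastZeroFiberEquiv (Finset.mem_range_succ_iff.mp hk)), Nat.card_prod,
    NatWalk.walkCount_eq_card, NatWalk.strictWalkCount_eq_card]
end
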